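/- arXiv:2409.03562 — 5 statements merged into one kernel-verified Lean document; each statement's English description precedes it below -/
import Mathlib

section
/- There exists a sequence of natural numbers s(n) with s(1) > 1, strictly increasing, with s(n+1)/s(n) ≥ 2 for all n, and such that for all n ≠ n', U_{s(n)}(r_{s(n')}) < 1/2^(n+n'), where U_m(r) = (1-r^2)·m·r^(m-1) and r_m = sqrt(1 - 1/m). -/
/-!
Take `s n = 2 ^ (4 n²)`. Since `1 - r_M² = 1 / M`, we have `U_m(r_M) = (m / M) · r_M ^ (m - 1)`.
If `m ≪ M` this is at most `m / M`. If `m ≫ M`, then `r_M ≤ exp (-1 / (2M))` turns it into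
`4y · exp (-y)` with `y = m / (4M)`, which is `< 8 / y` because `exp y > y² / 2`. The exponents
`4 n²` are spread out enough that both ratios beat `2 ^ (n + n')`.
-/

open Real

namespace Lacunary

def U (m : ℕ) (r : ℝ) : ℝ := (1 - r ^ 2) * m * r ^ (m - 1)

noncomputable def radius (m : ℕ) : ℝ := √(1 - 1 / m)

theorem radius_nonneg (M : ℕ) : 0 ≤ radius M := sqrt_nonneg _

theorem radius_le_one (M : ℕ) : radius M ≤ 1 :=
  sqrt_le_one.mpr (sub_le_self 1 (by positivity))

-- Also true for `M = 0`, where `1 / 0 = 0` makes both sides vanish.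
theorem one_sub_radius_sq (M : ℕ) : 1 - radius M ^ 2 = 1 / M := by
  rw [radius, sq_sqrt (by linarith [one_div (M : ℝ) ▸ Nat.cast_inv_le_one (α := ℝ) M])]
  ring

theorem U_radius (m M : ℕ) : U m (radius M) = m / M * radius M ^ (m - 1) := by
  rw [U, one_sub_radius_sq]
  ring

theorem radius_le_exp (M : ℕ) : radius M ≤ exp (-(1 / (2 * M))) := by
  calc radius M ≤ √(exp (-(1 / M))) :=
        sqrt_le_sqrt (by linarith [add_one_le_exp (-(1 / (M : ℝ)))])
    _ = exp (-(1 / (2 * M))) := by rw [← exp_half]; ring_nf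

theorem radius_pow_le_exp {m : ℕ} (hm : 2 ≤ m) (M : ℕ) :
    radius M ^ (m - 1) ≤ exp (-(m / (4 * M))) := by
  have hm' : (m : ℝ) / 2 ≤ ((m - 1 : ℕ) : ℝ) := by
    have : (2 : ℝ) ≤ m := by exact_mod_cast hm
    rw [Nat.cast_sub (by omega), Nat.cast_one]
    linarith
  calc radius M ^ (m - 1) ≤ exp (-(1 / (2 * M))) ^ (m - 1) :=
        pow_le_pow_left₀ (radius_nonneg M) (radius_le_exp M) _
    _ = exp (-(((m - 1 : ℕ) : ℝ) / (2 * M))) := by rw [← exp_nat_mul]; ring_nf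
    _ ≤ exp (-(m / (4 * M))) := by
        refine exp_le_exp.mpr (neg_le_neg ?_)
        calc (m : ℝ) / (4 * M) = m / 2 / (2 * M) := by ring
          _ ≤ _ := by gcongr

theorem mul_exp_neg_lt {x ε : ℝ} (hε : 0 < ε) (hx : 2 / ε ≤ x) : x * exp (-x) < ε := by
  have hx0 : 0 < x := lt_of_lt_of_le (by positivity) hx
  have hexp : x ^ 2 / 2 < exp x := by
    linarith [quadratic_le_exp_of_nonneg hx0.le]
  rw [exp_neg, ← div_eq_mul_inv, div_lt_iff₀ (exp_pos x)]
  calc x = 2 / x * (x ^ 2 / 2) := by field_simp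
    _ ≤ ε * (x ^ 2 / 2) := by gcongr; exact (div_le_comm₀ hε hx0).mp hx
    _ < ε * exp x := by gcongr

theorem U_radius_lt_of_lt_mul {m M : ℕ} {ε : ℝ} (h : (m : ℝ) < ε * M) :
    U m (radius M) < ε := by
  rcases M.eq_zero_or_pos with rfl | hM
  · exact absurd h (by simp)
  calc U m (radius M) = m / M * radius M ^ (m - 1) := U_radius m M
    _ ≤ m / M := mul_le_of_le_one_right (by positivity)
        (pow_le_one₀ (radius_nonneg M) (radius_le_one M))
    _ < ε := (div_lt_iff₀ (by exact_mod_cast hM)).mpr h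

theorem U_radius_lt_of_mul_le {m M : ℕ} {ε : ℝ} (hε : 0 < ε) (hm : 2 ≤ m)
    (h : 32 * (M : ℝ) ≤ ε * m) : U m (radius M) < ε := by
  rcases M.eq_zero_or_pos with rfl | hM
  · simpa [U_radius] using hε
  have hM' : (0 : ℝ) < M := by exact_mod_cast hM
  set y : ℝ := m / (4 * M)
  have hy : 2 / (ε / 4) ≤ y := by
    rw [div_le_div_iff₀ (by positivity) (by positivity)]
    linarith
  calc U m (radius M) = m / M * radius M ^ (m - 1) := U_radius m M
    _ ≤ m / M * exp (-y) := by gcongr; exact radius_pow_le_exp hm M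
    _ = 4 * (y * exp (-y)) := by simp only [y]; field_simp
    _ < 4 * (ε / 4) := by gcongr; exact mul_exp_neg_lt (by positivity) hy
    _ = ε := by ring

theorem thirtytwo_mul_two_pow_le {a b : ℕ} (ha : 1 ≤ a) (hab : a < b) :
    32 * (2 : ℝ) ^ (4 * a ^ 2) ≤ 2 ^ (4 * b ^ 2) / 2 ^ (a + b) := by
  rw [le_div_iff₀ (by positivity), show (32 : ℝ) = 2 ^ 5 by norm_num, ← pow_add, ← pow_add]
  exact pow_le_pow_right₀ one_le_two (by nlinarith)

end Lacunary

open Lacunary in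
theorem exists_lacunary_sequence :
    ∃ s : ℕ → ℕ,
      1 < s 1 ∧
      (∀ n, 1 ≤ n → s n < s (n + 1)) ∧
      (∀ n, 1 ≤ n → 2 * s n ≤ s (n + 1)) ∧
      (∀ n n', 1 ≤ n → 1 ≤ n' → n ≠ n' →
        (1 - Real.sqrt (1 - 1 / (s n' : ℝ)) ^ 2) * (s n : ℝ) *
            Real.sqrt (1 - 1 / (s n' : ℝ)) ^ (s n - 1) <
          1 / 2 ^ (n + n')) := by
  refine ⟨fun n => 2 ^ (4 * n ^ 2), by norm_num, fun n _ => ?_, fun n _ => ?_,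
    fun n n' hn hn' hne => ?_⟩
  · exact Nat.pow_lt_pow_right one_lt_two (by nlinarith)
  · rw [← pow_succ']
    exact Nat.pow_le_pow_right two_pos (by nlinarith)
  · change U _ (radius _) < _
    rcases hne.lt_or_gt with h | h
    · refine U_radius_lt_of_lt_mul ?_
      push_cast
      rw [one_div_mul_eq_div]
      linarith [thirtytwo_mul_two_pow_le hn h, pow_pos (two_pos (α := ℝ)) (4 * n ^ 2)]
    · refine U_radius_lt_of_mul_le (by positivity) (Nat.le_self_pow (by positivity) 2) ?_
      push_cast
      rw [one_div_mul_eq_div, add_comm n]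
      exact thirtytwo_mul_two_pow_le hn' h
end

section
/- There exists a family {N_α : α ∈ [0,1]} of subsets of ℕ such that for every finite collection of distinct indices α_0, α_1, ..., α_M ∈ [0,1], the set N_{α_0} \ (N_{α_1} ∪ ... ∪ N_{α_M}) is infinite. -/
/-!
Send each index injectively to a binary sequence (there are continuum many) and take the codes
of its finite prefixes. Two distinct sequences share only the prefixes shorter than their first
disagreement, so the family is almost disjoint: each member is infinite and meets every other
member in a finite set. Then `N α₀` minus finitely many other members still differs from `N α₀`
by a finite set only.
-/

open Set Cardinal

theorem Set.Infinite.sdiff_biUnion_of_inter_finite {ι α : Type*} {N : ι → Set α} {i : ι}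
    (A : Finset ι) (hi : (N i).Infinite) (hA : ∀ j ∈ A, (N i ∩ N j).Finite) :
    (N i \ ⋃ j ∈ A, N j).Infinite := by
  rw [← Set.sdiff_self_inter, Set.inter_iUnion₂]
  exact hi.sdiff (A.finite_toSet.biUnion hA)

def prefixes {β : Type*} (f : ℕ → β) : Set (List β) :=
  range fun n => (List.range n).map f

theorem prefixes_infinite {β : Type*} (f : ℕ → β) : (prefixes f).Infinite :=
  infinite_range_of_injective fun m n h => by
    simpa only [List.length_map, List.length_range] using congrArg List.length h

theorem prefixes_inter_finite {β : Type*} {f g : ℕ → β} (hfg : f ≠ g) :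
    (prefixes f ∩ prefixes g).Finite := by
  obtain ⟨k, hk⟩ := Function.ne_iff.mp hfg
  refine ((finite_Iic k).image fun n => (List.range n).map f).subset ?_
  rintro _ ⟨⟨n, rfl⟩, ⟨m, hmn⟩⟩
  have hm : m = n := by
    simpa only [List.length_map, List.length_range] using congrArg List.length hmn
  subst hm
  refine ⟨m, mem_Iic.mpr (not_lt.mp fun hkm => hk ?_), rfl⟩
  exact (List.map_inj_left.mp hmn k (List.mem_range.mpr hkm)).symm

theorem exists_almost_disjoint_family {ι : Type*} (hι : #ι ≤ 𝔠) :
    ∃ N : ι → Set ℕ, (∀ i, (N i).Infinite) ∧ Pairwise fun i j => (N i ∩ N j).Finite := by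
  obtain ⟨e⟩ : Nonempty (ι ↪ (ℕ → Bool)) := lift_mk_le'.mp (by simpa using hι)
  have hcode : Function.Injective (Encodable.encode : List Bool → ℕ) := Encodable.encode_injective
  refine ⟨fun i => Encodable.encode '' prefixes (e i), fun i => ?_, fun i j hij => ?_⟩
  · exact (prefixes_infinite (e i)).image hcode.injOn
  · simp only [← image_inter hcode]
    exact (prefixes_inter_finite (e.injective.ne hij)).image _

theorem exists_independent_family :
    ∃ N : Set.Icc (0 : ℝ) 1 → Set ℕ,
      ∀ (A : Finset (Set.Icc (0 : ℝ) 1)) (α₀ : Set.Icc (0 : ℝ) 1),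
        α₀ ∉ A → (N α₀ \ ⋃ α ∈ A, N α).Infinite := by
  obtain ⟨N, hinf, hdisj⟩ := exists_almost_disjoint_family (mk_Icc_real zero_lt_one).le
  refine ⟨N, fun A α₀ hα₀ => (hinf α₀).sdiff_biUnion_of_inter_finite A fun α hα => ?_⟩
  exact hdisj (ne_of_mem_of_not_mem hα hα₀).symm
end

section
/- If real random variables X and Y are independent and each has density t ↦ (1/√(2πt))·e^(-t/2) on (0,∞) (i.e., each is the square of a standard Gaussian), then X + Y has density t ↦ (1/2)·e^(-t/2) on (0,∞). -/
/-!
By independence the law of `X + Y` is the convolution of the two laws, and a convolution of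
densities is the density of the convolution. Both densities vanish on `(-∞, 0]`, so at `x > 0`
the convolution integral runs over `(0, x)`, where the exponentials combine to `e^(-x/2)` and
what remains is `(2π)⁻¹ ∫₀ˣ (y (x - y))^(-1/2) dy = 1/2`, an arcsine integral.
-/

open MeasureTheory Real Set

theorem hasDerivAt_arcsin_two_mul_sub_div {x y : ℝ} (hy : y ∈ Ioo 0 x) :
    HasDerivAt (fun y => arcsin ((2 * y - x) / x)) (√(y * (x - y)))⁻¹ y := by
  obtain ⟨hy0, hyx⟩ := hy
  have hx : 0 < x := hy0.trans hyx
  have hlin : HasDerivAt (fun y => (2 * y - x) / x) (2 / x) y := by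
    simpa using (((hasDerivAt_id y).const_mul 2).sub_const x).div_const x
  have hlo : (2 * y - x) / x ≠ -1 := by
    rw [Ne, div_eq_iff hx.ne']; linarith
  have hhi : (2 * y - x) / x ≠ 1 := by
    rw [Ne, div_eq_iff hx.ne']; linarith
  refine ((hasDerivAt_arcsin hlo hhi).comp y hlin).congr_deriv ?_
  have hsq : 1 - ((2 * y - x) / x) ^ 2 = (2 / x) ^ 2 * (y * (x - y)) := by
    field_simp; ring
  rw [hsq, sqrt_mul (by positivity), sqrt_sq (by positivity)]
  field_simp

theorem integrableOn_inv_sqrt_mul_sub (x : ℝ) :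
    IntegrableOn (fun y => (√(y * (x - y)))⁻¹) (Ioc 0 x) :=
  intervalIntegral.integrableOn_deriv_of_nonneg (by fun_prop)
    (fun _ hy => hasDerivAt_arcsin_two_mul_sub_div hy) (fun _ _ => by positivity)

theorem integral_inv_sqrt_mul_sub {x : ℝ} (hx : 0 < x) :
    ∫ y in 0..x, (√(y * (x - y)))⁻¹ = π := by
  rw [intervalIntegral.integral_eq_sub_of_hasDerivAt_of_le hx.le (by fun_prop)
    (fun _ hy => hasDerivAt_arcsin_two_mul_sub_div hy)
    ((intervalIntegrable_iff_integrableOn_Ioc_of_le hx.le).2 (integrableOn_inv_sqrt_mul_sub x))]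
  have hone : (2 * x - x) / x = 1 := by field_simp; ring
  have hneg : (2 * 0 - x) / x = -1 := by field_simp; ring
  rw [hone, hneg, arcsin_one, arcsin_neg_one]
  ring

theorem lconvolution_indicator_Ioi (f g : ℝ → ENNReal) (x : ℝ) :
    ((Ioi 0).indicator f ⋆ₗ (Ioi 0).indicator g) x = ∫⁻ y in Ioo 0 x, f y * g (x - y) := by
  rw [lconvolution_def, ← lintegral_indicator measurableSet_Ioo]
  congr 1 with y
  simp only [indicator, mem_Ioi, mem_Ioo, neg_add_eq_sub, sub_pos]
  split_ifs <;> simp_all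

theorem chiSq_density_mul_chiSq_density {x y : ℝ} (hy : 0 ≤ y) :
    1 / √(2 * π * y) * exp (-y / 2) * (1 / √(2 * π * (x - y)) * exp (-(x - y) / 2)) =
      exp (-x / 2) / (2 * π) * (√(y * (x - y)))⁻¹ := by
  have hsqrt : √(2 * π * y) * √(2 * π * (x - y)) = 2 * π * √(y * (x - y)) := by
    rw [← sqrt_mul (by positivity),
      show 2 * π * y * (2 * π * (x - y)) = (2 * π) ^ 2 * (y * (x - y)) by ring,
      sqrt_mul (by positivity), sqrt_sq (by positivity)]
  have hexp : exp (-y / 2) * exp (-(x - y) / 2) = exp (-x / 2) := by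
    rw [← exp_add]; ring_nf
  calc _ = exp (-y / 2) * exp (-(x - y) / 2) / (√(2 * π * y) * √(2 * π * (x - y))) := by ring
    _ = _ := by rw [hsqrt, hexp]; ring

theorem lconvolution_chiSq_density :
    (Ioi 0).indicator (fun t => ENNReal.ofReal (1 / √(2 * π * t) * exp (-t / 2))) ⋆ₗ
        (Ioi 0).indicator (fun t => ENNReal.ofReal (1 / √(2 * π * t) * exp (-t / 2))) =
      (Ioi 0).indicator (fun t => ENNReal.ofReal (1 / 2 * exp (-t / 2))) := by
  ext x
  rw [lconvolution_indicator_Ioi]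
  rcases le_or_gt x 0 with hx | hx
  · rw [Ioo_eq_empty (not_lt.2 hx), Measure.restrict_empty, lintegral_zero_measure,
      indicator_of_notMem (notMem_Ioi.2 hx)]
  rw [indicator_of_mem (mem_Ioi.2 hx)]
  calc _ = ∫⁻ y in Ioo 0 x, ENNReal.ofReal (exp (-x / 2) / (2 * π) * (√(y * (x - y)))⁻¹) := by
        refine setLIntegral_congr_fun measurableSet_Ioo fun y hy => ?_
        rw [← ENNReal.ofReal_mul (by positivity), chiSq_density_mul_chiSq_density hy.1.le]
    _ = ENNReal.ofReal (∫ y in Ioo 0 x, exp (-x / 2) / (2 * π) * (√(y * (x - y)))⁻¹) :=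
        (ofReal_integral_eq_lintegral_ofReal
          (((integrableOn_inv_sqrt_mul_sub x).mono_set Ioo_subset_Ioc_self).const_mul _)
          (ae_of_all _ fun y => by positivity)).symm
    _ = _ := by
        rw [integral_const_mul, ← integral_Ioc_eq_integral_Ioo,
          ← intervalIntegral.integral_of_le hx.le, integral_inv_sqrt_mul_sub hx]
        congr 1
        field_simp [pi_pos.ne']

theorem sum_of_chi_squares_density {Ω : Type*} [MeasurableSpace Ω]
    (μ : Measure Ω) [IsProbabilityMeasure μ] (X Y : Ω → ℝ)
    (hX : Measurable X) (hY : Measurable Y)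
    (hindep : ProbabilityTheory.IndepFun X Y μ)
    (hXd : Measure.map X μ = volume.withDensity
      (Set.indicator (Set.Ioi (0 : ℝ))
        (fun t => ENNReal.ofReal (1 / Real.sqrt (2 * π * t) * Real.exp (-t / 2)))))
    (hYd : Measure.map Y μ = volume.withDensity
      (Set.indicator (Set.Ioi (0 : ℝ))
        (fun t => ENNReal.ofReal (1 / Real.sqrt (2 * π * t) * Real.exp (-t / 2))))) :
    Measure.map (X + Y) μ = volume.withDensity
      (Set.indicator (Set.Ioi (0 : ℝ))
        (fun t => ENNReal.ofReal ((1 / 2) * Real.exp (-t / 2)))) := by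
  have hmeas : Measurable ((Ioi 0).indicator
      fun t : ℝ => ENNReal.ofReal (1 / √(2 * π * t) * exp (-t / 2))) :=
    Measurable.indicator (by fun_prop) measurableSet_Ioi
  rw [hindep.map_add_eq_map_conv_map hX hY, hXd, hYd,
    conv_withDensity_eq_lconvolution hmeas hmeas, lconvolution_chiSq_density]
end

section
/- Let f(z) = Σ_{n=0}^∞ a_n z^(s_n) be a power series where (s_n) is a strictly increasing sequence of natural numbers with s_{n+1}/s_n ≥ q for some q > 1, and suppose the coefficients (a_n) are bounded. Then f defines a holomorphic function on the unit disc satisfying sup_{|z|<1} (1-|z|^2)|f'(z)| < ∞, i.e., f belongs to the Bloch space. -/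
/-!
Differentiate termwise. For `0 ≤ r < 1` the gap condition gives
`s (n+1) - s n ≥ (1 - q⁻¹) s (n+1)`, so the block `∑_{s n ≤ k < s (n+1)} r ^ k` dominates
`(1 - q⁻¹) s (n+1) r ^ (s (n+1) - 1)`. Summing the blocks,
`∑ s n r ^ (s n - 1) ≤ (1 - q⁻¹)⁻¹ ∑ r ^ k = (1 - q⁻¹)⁻¹ (1 - r)⁻¹`, hence
`(1 - |z|²) |f' z| ≤ (1 + |z|) A (1 - q⁻¹)⁻¹ ≤ 2 A (1 - q⁻¹)⁻¹`.
-/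

open Metric Finset

lemma sub_mul_pow_pred_le_sum_Ico {r : ℝ} (hr0 : 0 ≤ r) (hr1 : r ≤ 1) {a b : ℕ} (hab : a ≤ b) :
    ((b : ℝ) - a) * r ^ (b - 1) ≤ ∑ k ∈ Ico a b, r ^ k := by
  have hterm : ∀ k ∈ Ico a b, r ^ (b - 1) ≤ r ^ k := fun k hk =>
    pow_le_pow_of_le_one hr0 hr1 (Nat.le_sub_one_of_lt (mem_Ico.mp hk).2)
  simpa [Nat.cast_sub hab] using card_nsmul_le_sum _ _ _ hterm

lemma sum_range_pow_le_inv_one_sub {r : ℝ} (hr0 : 0 ≤ r) (hr1 : r < 1) (m : ℕ) :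
    ∑ k ∈ range m, r ^ k ≤ (1 - r)⁻¹ := by
  simpa [← range_eq_Ico] using geom_sum_Ico_le_of_lt_one (m := 0) (n := m) hr0 hr1

section Lacunary

variable {s : ℕ → ℕ} {q r : ℝ}

lemma one_sub_inv_mul_sum_le_sum_range_pow (hq : 1 ≤ q)
    (hgap : ∀ n, q * (s n : ℝ) ≤ s (n + 1)) (hr0 : 0 ≤ r) (hr1 : r ≤ 1) (N : ℕ) :
    (1 - q⁻¹) * ∑ n ∈ range (N + 1), (s n : ℝ) * r ^ (s n - 1) ≤ ∑ k ∈ range (s N), r ^ k := by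
  have hq0 : 0 < q := zero_lt_one.trans_le hq
  have hq1 : 0 ≤ q⁻¹ := inv_nonneg.mpr hq0.le
  induction N with
  | zero =>
    have h := sub_mul_pow_pred_le_sum_Ico hr0 hr1 (Nat.zero_le (s 0))
    rw [Nat.cast_zero, sub_zero, ← range_eq_Ico] at h
    rw [sum_range_one]
    exact (mul_le_of_le_one_left (by positivity) (by linarith)).trans h
  | succ N ih =>
    have hle : s N ≤ s (N + 1) := by
      exact_mod_cast (le_mul_of_one_le_left (Nat.cast_nonneg _) hq).trans (hgap N)
    have hblock : (1 - q⁻¹) * (s (N + 1) : ℝ) ≤ s (N + 1) - s N := by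
      have := mul_le_mul_of_nonneg_left (hgap N) hq1
      rw [← mul_assoc, inv_mul_cancel₀ hq0.ne', one_mul] at this
      linarith
    have hterm := (mul_le_mul_of_nonneg_right hblock (pow_nonneg hr0 (s (N + 1) - 1))).trans
      (sub_mul_pow_pred_le_sum_Ico hr0 hr1 hle)
    rw [sum_range_succ, mul_add, ← sum_range_add_sum_Ico _ hle, ← mul_assoc]
    exact add_le_add ih hterm

lemma sum_range_natCast_mul_pow_pred_le (hq : 1 < q)
    (hgap : ∀ n, q * (s n : ℝ) ≤ s (n + 1)) (hr0 : 0 ≤ r) (hr1 : r < 1) (N : ℕ) :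
    ∑ n ∈ range N, (s n : ℝ) * r ^ (s n - 1) ≤ (1 - q⁻¹)⁻¹ * (1 - r)⁻¹ := by
  have hq1 : 0 < 1 - q⁻¹ := sub_pos.mpr (inv_lt_one_of_one_lt₀ hq)
  cases N with
  | zero =>
    rw [sum_range_zero]
    exact mul_nonneg (inv_pos.mpr hq1).le (inv_nonneg.mpr (by linarith))
  | succ N =>
    rw [le_inv_mul_iff₀ hq1]
    exact (one_sub_inv_mul_sum_le_sum_range_pow hq.le hgap hr0 hr1.le N).trans
      (sum_range_pow_le_inv_one_sub hr0 hr1 _)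

lemma summable_natCast_mul_pow_pred (hq : 1 < q)
    (hgap : ∀ n, q * (s n : ℝ) ≤ s (n + 1)) (hr0 : 0 ≤ r) (hr1 : r < 1) :
    Summable fun n => (s n : ℝ) * r ^ (s n - 1) :=
  summable_of_sum_range_le (fun n => by positivity)
    (sum_range_natCast_mul_pow_pred_le hq hgap hr0 hr1)

lemma tsum_natCast_mul_pow_pred_le (hq : 1 < q)
    (hgap : ∀ n, q * (s n : ℝ) ≤ s (n + 1)) (hr0 : 0 ≤ r) (hr1 : r < 1) :
    ∑' n, (s n : ℝ) * r ^ (s n - 1) ≤ (1 - q⁻¹)⁻¹ * (1 - r)⁻¹ :=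
  (summable_natCast_mul_pow_pred hq hgap hr0 hr1).tsum_le_of_sum_range_le
    (sum_range_natCast_mul_pow_pred_le hq hgap hr0 hr1)

end Lacunary

section PowerSeries

variable {s : ℕ → ℕ} {a : ℕ → ℂ} {A : ℝ}

lemma norm_mul_natCast_mul_pow_pred_le (ha : ∀ n, ‖a n‖ ≤ A) {z : ℂ} {r : ℝ} (hz : ‖z‖ ≤ r)
    (n : ℕ) : ‖a n * (s n * z ^ (s n - 1))‖ ≤ A * ((s n : ℝ) * r ^ (s n - 1)) := by
  rw [norm_mul, norm_mul, norm_pow, Complex.norm_natCast]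
  have hA : 0 ≤ A := (norm_nonneg _).trans (ha 0)
  gcongr
  exact ha n

lemma hasDerivAt_tsum_mul_pow (hs : Function.Injective s) (ha : ∀ n, ‖a n‖ ≤ A)
    (hsum : ∀ r : ℝ, 0 ≤ r → r < 1 → Summable fun n => (s n : ℝ) * r ^ (s n - 1))
    {z : ℂ} (hz : ‖z‖ < 1) :
    HasDerivAt (fun z : ℂ => ∑' n, a n * z ^ s n) (∑' n, a n * (s n * z ^ (s n - 1))) z := by
  obtain ⟨r, hzr, hr1⟩ := exists_between hz
  have hr0 : 0 < r := (norm_nonneg z).trans_lt hzr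
  -- Injectivity leaves at most one constant term, so the series converges at `0`.
  have hsum0 : Summable fun n => a n * (0 : ℂ) ^ s n := by
    refine summable_of_hasFiniteSupport
      (((Set.subsingleton_singleton (a := 0)).preimage hs).finite.subset fun n hn => ?_)
    by_contra h
    exact hn (by simp [zero_pow h])
  exact hasDerivAt_tsum_of_isPreconnected ((hsum r hr0.le hr1).mul_left A) isOpen_ball
    (convex_ball (0 : ℂ) r).isPreconnected (fun n y _ => (hasDerivAt_pow (s n) y).const_mul (a n))
    (fun n y hy => norm_mul_natCast_mul_pow_pred_le ha (mem_ball_zero_iff.mp hy).le n)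
    (mem_ball_self hr0) hsum0 (mem_ball_zero_iff.mpr hzr)

lemma norm_tsum_mul_natCast_mul_pow_pred_le (ha : ∀ n, ‖a n‖ ≤ A) {z : ℂ}
    (hsum : Summable fun n => (s n : ℝ) * ‖z‖ ^ (s n - 1)) :
    ‖∑' n, a n * (s n * z ^ (s n - 1))‖ ≤ A * ∑' n, (s n : ℝ) * ‖z‖ ^ (s n - 1) := by
  rw [← tsum_mul_left]
  exact tsum_of_norm_bounded (hsum.mul_left A).hasSum (norm_mul_natCast_mul_pow_pred_le ha le_rfl)

end PowerSeries

theorem lacunary_bounded_coeffs_in_Bloch (s : ℕ → ℕ) (hmono : StrictMono s) (q : ℝ) (hq : 1 < q)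
    (hgap : ∀ n, q * (s n : ℝ) ≤ (s (n + 1) : ℝ))
    (a : ℕ → ℂ) (A : ℝ) (ha : ∀ n, ‖a n‖ ≤ A) :
    DifferentiableOn ℂ (fun z : ℂ => ∑' n, a n * z ^ s n) (ball (0 : ℂ) 1) ∧
    ∃ C : ℝ, ∀ z ∈ ball (0 : ℂ) 1,
      (1 - ‖z‖ ^ 2) * ‖deriv (fun z : ℂ => ∑' n, a n * z ^ s n) z‖ ≤ C := by
  have hA : 0 ≤ A := (norm_nonneg _).trans (ha 0)
  have hderiv : ∀ z ∈ ball (0 : ℂ) 1, HasDerivAt (fun z : ℂ => ∑' n, a n * z ^ s n)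
      (∑' n, a n * (s n * z ^ (s n - 1))) z := fun z hz =>
    hasDerivAt_tsum_mul_pow hmono.injective ha
      (fun _ hr0 hr1 => summable_natCast_mul_pow_pred hq hgap hr0 hr1) (mem_ball_zero_iff.mp hz)
  refine ⟨fun z hz => (hderiv z hz).differentiableAt.differentiableWithinAt,
    2 * A * (1 - q⁻¹)⁻¹, fun z hz => ?_⟩
  have hz1 : ‖z‖ < 1 := mem_ball_zero_iff.mp hz
  have hq1 : 0 < 1 - q⁻¹ := sub_pos.mpr (inv_lt_one_of_one_lt₀ hq)
  rw [(hderiv z hz).deriv]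
  calc (1 - ‖z‖ ^ 2) * ‖∑' n, a n * (s n * z ^ (s n - 1))‖
      ≤ (1 - ‖z‖ ^ 2) * (A * ((1 - q⁻¹)⁻¹ * (1 - ‖z‖)⁻¹)) := by
        have : 0 ≤ 1 - ‖z‖ ^ 2 := by nlinarith [norm_nonneg z]
        gcongr
        exact (norm_tsum_mul_natCast_mul_pow_pred_le ha
          (summable_natCast_mul_pow_pred hq hgap (norm_nonneg z) hz1)).trans
          (mul_le_mul_of_nonneg_left (tsum_natCast_mul_pow_pred_le hq hgap (norm_nonneg z) hz1) hA)
    _ = (1 + ‖z‖) * A * (1 - q⁻¹)⁻¹ := by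
        field_simp [(sub_pos.mpr hz1).ne']
        ring
    _ ≤ 2 * A * (1 - q⁻¹)⁻¹ := by gcongr; linarith
end

section
/- Let H be the set of holomorphic functions f on the unit disc with f(0) = 0 and bounded Bloch seminorm, and suppose f ∈ H. Then the function g(z) = f(z)/z (extended by g(0) = f'(0)) is holomorphic on the disc and has finite Bloch norm; moreover there is a constant K independent of f with ‖g‖_𝓑 ≤ K·‖f‖_𝓑, where ‖h‖_𝓑 = |h(0)| + sup_{|z|<1}(1-|z|^2)|h'(z)|. -/
/-!
Since `f 0 = 0`, the function `g` is the difference quotient `dslope f 0`, which is holomorphic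
on the disc. Integrating `‖f'(x)‖ ≤ C / (1 - ‖x‖²)` along the segment `[0, z]` gives
`‖f z‖ ≤ C ‖z‖ / (1 - ‖z‖²)`, hence `‖g w‖ ≤ C / (1 - ‖w‖²)`. Near the boundary (`‖z‖ > 1/2`) the
quotient rule `g' = f'/z - f/z²` and these two bounds give `(1 - ‖z‖²) ‖g'(z)‖ ≤ 4C`; on the disc
`‖z‖ ≤ 1/2` the Cauchy estimate on a circle of radius `1/4` gives `‖g'(z)‖ ≤ 12C`.
-/

open Metric

variable {E : Type*} [NormedAddCommGroup E] [NormedSpace ℂ E] {f : ℂ → E} {C : ℝ}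

def HasBlochBound (f : ℂ → E) (C : ℝ) : Prop :=
  ∀ z ∈ ball (0 : ℂ) 1, (1 - ‖z‖ ^ 2) * ‖deriv f z‖ ≤ C

lemma one_sub_norm_sq_pos {z : ℂ} (hz : z ∈ ball (0 : ℂ) 1) : 0 < 1 - ‖z‖ ^ 2 := by
  rw [mem_ball_zero_iff] at hz
  nlinarith [norm_nonneg z]

lemma hasDerivAt_dslope_of_ne {a z : ℂ} (hf : DifferentiableAt ℂ f z) (hz : z ≠ a) :
    HasDerivAt (dslope f a) ((z - a)⁻¹ • deriv f z - ((z - a) ^ 2)⁻¹ • (f z - f a)) z := by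
  have hza : z - a ≠ 0 := sub_ne_zero.mpr hz
  have hslope : HasDerivAt (fun w => (w - a)⁻¹ • (f w - f a))
      ((z - a)⁻¹ • deriv f z + (-((z - a) ^ 2)⁻¹) • (f z - f a)) z :=
    ((hasDerivAt_inv hza).comp_sub_const z a).smul (hf.hasDerivAt.sub_const _)
  rw [neg_smul, ← sub_eq_add_neg] at hslope
  refine hslope.congr_of_eventuallyEq ?_
  filter_upwards [isOpen_ne.mem_nhds hz] with w hw
  rw [dslope_of_ne _ hw, slope_def_module]

namespace HasBlochBound

lemma nonneg (hf : HasBlochBound f C) : 0 ≤ C :=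
  (mul_nonneg (one_sub_norm_sq_pos (mem_ball_self one_pos)).le (norm_nonneg _)).trans
    (hf 0 (mem_ball_self one_pos))

lemma norm_deriv_le (hf : HasBlochBound f C) {z : ℂ} (hz : z ∈ ball (0 : ℂ) 1) :
    ‖deriv f z‖ ≤ C / (1 - ‖z‖ ^ 2) := by
  rw [le_div_iff₀ (one_sub_norm_sq_pos hz), mul_comm]
  exact hf z hz

lemma norm_sub_apply_zero_le (hf : HasBlochBound f C) (hd : DifferentiableOn ℂ f (ball 0 1))
    {z : ℂ} (hz : z ∈ ball (0 : ℂ) 1) : ‖f z - f 0‖ ≤ C * ‖z‖ / (1 - ‖z‖ ^ 2) := by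
  rw [mul_div_right_comm]
  have hsub : closedBall (0 : ℂ) ‖z‖ ⊆ ball 0 1 := closedBall_subset_ball (mem_ball_zero_iff.mp hz)
  simpa using (convex_closedBall (0 : ℂ) ‖z‖).norm_image_sub_le_of_norm_deriv_le
    (fun x hx => hd.differentiableAt (isOpen_ball.mem_nhds (hsub hx)))
    (fun x hx => (hf.norm_deriv_le (hsub hx)).trans <|
      div_le_div_of_nonneg_left hf.nonneg (one_sub_norm_sq_pos hz) <| by
        have : ‖x‖ ≤ ‖z‖ := by simpa using hx
        gcongr)
    (mem_closedBall_self (norm_nonneg z)) (by simp)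

lemma norm_dslope_le (hf : HasBlochBound f C) (hd : DifferentiableOn ℂ f (ball 0 1)) {z : ℂ}
    (hz : z ∈ ball (0 : ℂ) 1) : ‖dslope f 0 z‖ ≤ C / (1 - ‖z‖ ^ 2) := by
  rcases eq_or_ne z 0 with rfl | hz0
  · simpa [dslope_same] using hf.norm_deriv_le hz
  · rw [dslope_of_ne _ hz0, slope_def_module, norm_smul, norm_inv, sub_zero,
      inv_mul_le_iff₀ (norm_pos_iff.mpr hz0), ← mul_div_assoc, mul_comm ‖z‖]
    exact hf.norm_sub_apply_zero_le hd hz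

lemma norm_deriv_dslope_le_of_half_lt (hf : HasBlochBound f C)
    (hd : DifferentiableOn ℂ f (ball 0 1)) {z : ℂ} (hz : z ∈ ball (0 : ℂ) 1) (hz2 : 1 / 2 < ‖z‖) :
    (1 - ‖z‖ ^ 2) * ‖deriv (dslope f 0) z‖ ≤ 4 * C := by
  have hz0 : z ≠ 0 := norm_pos_iff.mp (by linarith)
  have hpos := one_sub_norm_sq_pos hz
  rw [(hasDerivAt_dslope_of_ne (hd.differentiableAt (isOpen_ball.mem_nhds hz)) hz0).deriv,
    sub_zero]
  have hnorm : ‖z⁻¹ • deriv f z - (z ^ 2)⁻¹ • (f z - f 0)‖ ≤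
      ‖deriv f z‖ / ‖z‖ + ‖f z - f 0‖ / ‖z‖ ^ 2 := by
    refine (norm_sub_le _ _).trans_eq ?_
    simp only [norm_smul, norm_inv, norm_pow, inv_mul_eq_div]
  calc (1 - ‖z‖ ^ 2) * ‖z⁻¹ • deriv f z - (z ^ 2)⁻¹ • (f z - f 0)‖
      ≤ ((1 - ‖z‖ ^ 2) * ‖deriv f z‖) / ‖z‖ + ((1 - ‖z‖ ^ 2) * ‖f z - f 0‖) / ‖z‖ ^ 2 := by
        rw [mul_div_assoc, mul_div_assoc, ← mul_add]
        exact mul_le_mul_of_nonneg_left hnorm hpos.le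
    _ ≤ C / ‖z‖ + C * ‖z‖ / ‖z‖ ^ 2 := by
        have hquot : (1 - ‖z‖ ^ 2) * ‖f z - f 0‖ ≤ C * ‖z‖ := by
          rw [← le_div_iff₀' hpos]
          exact hf.norm_sub_apply_zero_le hd hz
        gcongr
        exact hf z hz
    _ = 2 * C / ‖z‖ := by field_simp; ring
    _ ≤ 4 * C := by
        rw [div_le_iff₀ (by linarith)]
        nlinarith [hf.nonneg]

lemma norm_deriv_dslope_le_of_norm_le_half [CompleteSpace E] (hf : HasBlochBound f C)
    (hd : DifferentiableOn ℂ f (ball 0 1)) {z : ℂ} (hz : ‖z‖ ≤ 1 / 2) :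
    ‖deriv (dslope f 0) z‖ ≤ 12 * C := by
  have hsub : closedBall z (1 / 4) ⊆ closedBall (0 : ℂ) (3 / 4) := by
    intro w hw
    rw [mem_closedBall_iff_norm] at hw
    rw [mem_closedBall_zero_iff]
    calc ‖w‖ ≤ ‖w - z‖ + ‖z‖ := norm_le_norm_sub_add w z
      _ ≤ 3 / 4 := by linarith
  have hdisc : closedBall (0 : ℂ) (3 / 4) ⊆ ball 0 1 := closedBall_subset_ball (by norm_num)
  have hg : DiffContOnCl ℂ (dslope f 0) (ball z (1 / 4)) := by
    refine DifferentiableOn.diffContOnCl ?_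
    rw [closure_ball z (by norm_num)]
    exact ((Complex.differentiableOn_dslope (isOpen_ball.mem_nhds (mem_ball_self one_pos))).mpr
      hd).mono (hsub.trans hdisc)
  have hbound : ∀ w ∈ sphere z (1 / 4), ‖dslope f 0 w‖ ≤ 3 * C := by
    intro w hw
    have hw : ‖w‖ ≤ 3 / 4 := mem_closedBall_zero_iff.mp (hsub (sphere_subset_closedBall hw))
    have hw1 : w ∈ ball (0 : ℂ) 1 := hdisc (mem_closedBall_zero_iff.mpr hw)
    refine (hf.norm_dslope_le hd hw1).trans ?_
    rw [div_le_iff₀ (one_sub_norm_sq_pos hw1)]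
    have : ‖w‖ ^ 2 ≤ 9 / 16 := by nlinarith [norm_nonneg w]
    nlinarith [hf.nonneg, mul_nonneg hf.nonneg (sub_nonneg.mpr this)]
  calc ‖deriv (dslope f 0) z‖ ≤ 3 * C / (1 / 4) :=
        Complex.norm_deriv_le_of_forall_mem_sphere_norm_le (by norm_num) hg hbound
    _ = 12 * C := by ring

lemma dslope_zero [CompleteSpace E] (hf : HasBlochBound f C)
    (hd : DifferentiableOn ℂ f (ball 0 1)) : HasBlochBound (dslope f 0) (12 * C) := by
  intro z hz
  rcases le_or_gt ‖z‖ (1 / 2) with hz2 | hz2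
  · calc (1 - ‖z‖ ^ 2) * ‖deriv (dslope f 0) z‖ ≤ 1 * (12 * C) := by
          gcongr
          · nlinarith [norm_nonneg z]
          · exact hf.norm_deriv_dslope_le_of_norm_le_half hd hz2
      _ = 12 * C := one_mul _
  · linarith [hf.norm_deriv_dslope_le_of_half_lt hd hz hz2, hf.nonneg]

end HasBlochBound

theorem division_property_Bloch :
    ∃ K : ℝ, 0 < K ∧ ∀ (f : ℂ → ℂ) (C : ℝ),
      DifferentiableOn ℂ f (ball (0 : ℂ) 1) → f 0 = 0 →
      (∀ z ∈ ball (0 : ℂ) 1, (1 - ‖z‖ ^ 2) * ‖deriv f z‖ ≤ C) →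
      letI g : ℂ → ℂ := fun z => if z = 0 then deriv f 0 else f z / z
      DifferentiableOn ℂ g (ball (0 : ℂ) 1) ∧
        ∀ z ∈ ball (0 : ℂ) 1,
          ‖g 0‖ + (1 - ‖z‖ ^ 2) * ‖deriv g z‖ ≤ K * (‖f 0‖ + C) := by
  refine ⟨13, by norm_num, fun f C hd hf0 hf => ?_⟩
  have hg : (fun z => if z = 0 then deriv f 0 else f z / z) = dslope f 0 := by
    funext z
    rcases eq_or_ne z 0 with rfl | hz
    · simp [dslope_same]
    · simp [hz, dslope_of_ne _ hz, slope, hf0, div_eq_inv_mul]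
  rw [hg, hf0, norm_zero, zero_add]
  refine ⟨(Complex.differentiableOn_dslope (isOpen_ball.mem_nhds (mem_ball_self one_pos))).mpr hd,
    fun z hz => ?_⟩
  have hg0 : ‖dslope f 0 0‖ ≤ C := by simpa [dslope_same] using hf 0 (mem_ball_self one_pos)
  linarith [HasBlochBound.dslope_zero hf hd z hz]
end
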